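/- arXiv:1207.4650 — 3 statements merged into one kernel-verified Lean document; each statement's English description precedes it below -/
import Mathlib

section
/- For every positive rational number q there exists a finitely presented group G such that RG(G) = q. In fact, if q = m/n with m, n positive integers, the group G = F_{m+1} × A, where F_{m+1} is a free group of rank m+1 and A is any group of order n, satisfies RG(G) = m/n. -/
/-- `dGen G` is the minimal number of generators of the group `G`. -/
noncomputable def dGen (G : Type*) [Group G] : ℕ :=
  sInf {n : ℕ | ∃ S : Finset G, S.card = n ∧ Subgroup.closure (S : Set G) = ⊤}

/-- The rank gradient of `G`. -/
noncomputable def rankGradient (G : Type*) [Group G] : ℝ :=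
  sInf {r : ℝ | ∃ H : Subgroup G, H.index ≠ 0 ∧ r = ((dGen H : ℝ) - 1) / (H.index : ℝ)}

open scoped commutatorElement

/-- The subgroup `[G,G]G^p` of `G` (as a normal closure of its generators). -/
def pCommPow (p : ℕ) (G : Type*) [Group G] : Subgroup G :=
  Subgroup.normalClosure ({x | ∃ a b : G, x = ⁅a, b⁆} ∪ {x | ∃ g : G, x = g ^ p})

instance pCommPow_normal (p : ℕ) (G : Type*) [Group G] : (pCommPow p G).Normal :=
  Subgroup.normalClosure_normal

/-- `d_p(G) = d(G/([G,G]G^p))`. -/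
noncomputable def dp (p : ℕ) (G : Type*) [Group G] : ℕ :=
  dGen (G ⧸ pCommPow p G)

/-- The `p`-gradient of `G`. -/
noncomputable def pGradient (p : ℕ) (G : Type*) [Group G] : ℝ :=
  sInf {r : ℝ | ∃ H : Subgroup G, H.Normal ∧ (∃ k : ℕ, H.index = p ^ k) ∧
    r = ((dp p H : ℝ) - 1) / (H.index : ℝ)}

/-- The `p`-residual: intersection of all normal subgroups of `p`-power index. -/
def pResidual (p : ℕ) (G : Type*) [Group G] : Subgroup G :=
  ⨅ H ∈ {H : Subgroup G | H.Normal ∧ ∃ k : ℕ, H.index = p ^ k}, H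

instance pResidual_normal (p : ℕ) (G : Type*) [Group G] : (pResidual p G).Normal := by
  constructor
  intro n hn g
  simp only [pResidual, Subgroup.mem_iInf] at hn ⊢
  intro H hH
  exact hH.1.conj_mem n (hn H hH) g


/-- A group is finitely presented if it is the quotient of a finite-rank free group
by the normal closure of finitely many relators. -/
def IsFinitelyPresentedGroup (G : Type*) [Group G] : Prop :=
  ∃ (n : ℕ) (f : FreeGroup (Fin n) →* G) (S : Finset (FreeGroup (Fin n))),
    Function.Surjective f ∧ f.ker = Subgroup.normalClosure (S : Set (FreeGroup (Fin n)))

/-!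
Let `B` have index `n` in the free group `F` on a finite set `ι`. Its Schreier graph has `n` vertices
and `n·|ι|` edges, and reading words along it gives a crossed homomorphism `σ` from `F` to the
`ℚ`-valued functions on the edges which is additive on `B`. Every edge indicator is `σ` of a loop
in `B` corrected by the values of `σ` at two coset representatives, so `σ(B)` and `n - 1` further
vectors span all `n·|ι|` edge functions: `d(B) ≥ n(|ι| - 1) + 1`, the Schreier bound.

If `H` has finite index in `F × A` with `A` finite, its projection `B` to `F` satisfies
`d(B) ≤ d(H)` and `[F × A : H] ≤ [F : B]·|A|`, so `(d(H) - 1)/[F × A : H] ≥ (|ι| - 1)/|A|`, with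
equality for `H = F × 1`. Finally `F × ℤ/den` is finitely presented because the kernel of
`G ∗ H → G × H` is normally generated by the commutators of generators of `G` with those of `H`.
-/

section FinitelyPresented

open Subgroup in
theorem Monoid.Coprod.ker_lift_inl_inr {G H : Type*} [Group G] [Group H] {S : Set G} {T : Set H}
    (hS : closure S = ⊤) (hT : closure T = ⊤) :
    (lift (MonoidHom.inl G H) (MonoidHom.inr G H)).ker =
      normalClosure (Set.image2 (fun s t => ⁅(inl s : Coprod G H), (inr t : Coprod G H)⁆) S T) := by
  refine le_antisymm ?_ (normalClosure_le_normal ?_)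
  · let π := QuotientGroup.mk' (normalClosure
      (Set.image2 (fun s t => ⁅(inl s : Coprod G H), (inr t : Coprod G H)⁆) S T))
    have hcomm : ∀ g h, Commute (π (inl g)) (π (inr h)) := by
      have : (π.comp inl).range ≤ centralizer (π.comp inr).range := by
        rw [MonoidHom.range_eq_map, ← hS, MonoidHom.map_closure, closure_le,
          MonoidHom.range_eq_map, ← hT, MonoidHom.map_closure, centralizer_closure]
        rintro _ ⟨s, hs, rfl⟩ _ ⟨t, ht, rfl⟩
        refine (commutatorElement_eq_one_iff_commute.mp ?_).symm
        rw [MonoidHom.comp_apply, MonoidHom.comp_apply, ← map_commutatorElement,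
          QuotientGroup.mk'_apply, QuotientGroup.eq_one_iff]
        exact subset_normalClosure ⟨s, hs, t, ht, rfl⟩
      exact fun g h => (this ⟨g, rfl⟩ _ ⟨h, rfl⟩).symm
    have hπ : ((π.comp inl).noncommCoprod (π.comp inr) hcomm).comp
        (lift (MonoidHom.inl G H) (MonoidHom.inr G H)) = π :=
      hom_ext (by ext; simp) (by ext; simp)
    intro w hw
    rw [← QuotientGroup.eq_one_iff]
    change π w = 1
    rw [← hπ, MonoidHom.comp_apply, MonoidHom.mem_ker.mp hw, map_one]
  · rintro _ ⟨s, -, t, -, rfl⟩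
    simp [commutatorElement_def]

instance Group.IsFinitelyPresented.prod {G H : Type*} [Group G] [Group H]
    [hG : Group.IsFinitelyPresented G] [hH : Group.IsFinitelyPresented H] :
    Group.IsFinitelyPresented (G × H) := by
  obtain ⟨_, φ, hφ, -⟩ := hG.out
  obtain ⟨_, ψ, hψ, -⟩ := hH.out
  obtain ⟨S, hS, hSfin⟩ := Group.fg_iff.mp (Group.fg_of_surjective hφ)
  obtain ⟨T, hT, hTfin⟩ := Group.fg_iff.mp (Group.fg_of_surjective hψ)
  refine of_surjective _ (fun gh => ⟨Monoid.Coprod.inl gh.1 * Monoid.Coprod.inr gh.2, by simp⟩)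
    ⟨_, hSfin.image2 _ hTfin, (Monoid.Coprod.ker_lift_inl_inr hS hT).symm⟩

theorem IsFinitelyPresentedGroup.of_isFinitelyPresented {G : Type*} [Group G]
    [h : Group.IsFinitelyPresented G] : IsFinitelyPresentedGroup G := by
  obtain ⟨n, φ, hφ, S, hS, hker⟩ := h.out
  exact ⟨n, φ, hS.toFinset, hφ, by rw [← hker, Set.Finite.coe_toFinset]⟩

end FinitelyPresented

theorem dGen_eq_rank (G : Type*) [Group G] [Group.FG G] : dGen G = Group.rank G := by
  refine le_antisymm (Nat.sInf_le (Group.rank_spec G)) ?_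
  obtain ⟨S, hS, hSG⟩ := Nat.sInf_mem (⟨_, Group.rank_spec G⟩ :
    {n | ∃ S : Finset G, S.card = n ∧ Subgroup.closure (S : Set G) = ⊤}.Nonempty)
  exact (Group.rank_le hSG).trans hS.le

section SchreierGraph

variable {ι : Type*}

/-- Rational 1-chains on the Cayley graph of `FreeGroup ι`; the edge from `p` to `p * of i` is
`single p (Pi.single i 1)`. -/
abbrev CayleyChain (ι : Type*) := FreeGroup ι →₀ (ι → ℚ)

noncomputable instance : DistribMulAction (FreeGroup ι) (CayleyChain ι) :=
  Finsupp.comapDistribMulAction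

variable (B : Subgroup (FreeGroup ι))

/-- Pushes chains down to the Schreier graph of `B`. Its vertex `Bp` is recorded as the left
coset `p⁻¹B`, so that left translation by elements of `B` becomes invisible. -/
noncomputable def schreierProj : CayleyChain ι →ₗ[ℚ] (FreeGroup ι ⧸ B → ι → ℚ) :=
  Finsupp.lcoeFun ∘ₗ
    Finsupp.lmapDomain (ι → ℚ) ℚ (fun p => ((p⁻¹ : FreeGroup ι) : FreeGroup ι ⧸ B))

open scoped Classical in
theorem schreierProj_single (p : FreeGroup ι) (v : ι → ℚ) :
    schreierProj B (Finsupp.single p v) =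
      Pi.single ((p⁻¹ : FreeGroup ι) : FreeGroup ι ⧸ B) v := by
  simp [schreierProj, Finsupp.single_eq_pi_single]

theorem schreierProj_smul {u : FreeGroup ι} (hu : u ∈ B) (a : CayleyChain ι) :
    schreierProj B (u • a) = schreierProj B a := by
  rw [Finsupp.comapSMul_def]
  simp only [schreierProj, LinearMap.comp_apply, Finsupp.lmapDomain_apply]
  rw [← Finsupp.mapDomain_comp]
  congr 2
  funext p
  rw [Function.comp_apply, smul_eq_mul, QuotientGroup.eq]
  simpa using hu

variable [DecidableEq ι]

/-- Lifting the affine action `a ↦ pathChain w + w • a` (see `cayleyWalk_apply`) from the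
generators is what defines the crossed homomorphism `pathChain`. -/
noncomputable def cayleyWalk : FreeGroup ι →* Equiv.Perm (CayleyChain ι) :=
  FreeGroup.lift fun i => (DistribMulAction.toAddEquiv _ (FreeGroup.of i)).toEquiv.trans
    (Equiv.addLeft (Finsupp.single 1 (Pi.single i 1)))

noncomputable def pathChain (w : FreeGroup ι) : CayleyChain ι := cayleyWalk w 0

theorem cayleyWalk_apply (w : FreeGroup ι) (a : CayleyChain ι) :
    cayleyWalk w a = pathChain w + w • a := by
  induction w using FreeGroup.induction_on generalizing a with
  | C1 => simp [pathChain]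
  | of i => simp [pathChain, cayleyWalk]
  | inv_of i h =>
    have h0 : FreeGroup.of i • pathChain (FreeGroup.of i)⁻¹ = -pathChain (FreeGroup.of i) := by
      rw [eq_neg_iff_add_eq_zero, add_comm, ← h, pathChain, ← Equiv.Perm.mul_apply, ← map_mul,
        mul_inv_cancel, map_one, Equiv.Perm.one_apply]
    obtain ⟨b, rfl⟩ := (cayleyWalk (FreeGroup.of i)).surjective a
    rw [← Equiv.Perm.mul_apply, ← map_mul, inv_mul_cancel, map_one, Equiv.Perm.one_apply, h,
      eq_inv_smul_iff.mpr h0, smul_add, inv_smul_smul, smul_neg, neg_add_cancel_left]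
  | mul u v hu hv =>
    simp only [pathChain, map_mul, Equiv.Perm.mul_apply] at hu hv ⊢
    rw [hv, hv 0, hu, hu (_ + _), smul_add, smul_zero, add_zero, mul_smul, add_assoc]

theorem pathChain_one : pathChain (1 : FreeGroup ι) = 0 := by
  simp [pathChain]

theorem pathChain_of (i : ι) :
    pathChain (FreeGroup.of i) = Finsupp.single 1 (Pi.single i 1) := by
  simp [pathChain, cayleyWalk]

theorem pathChain_mul (u v : FreeGroup ι) :
    pathChain (u * v) = pathChain u + u • pathChain v := by
  simp only [pathChain, map_mul, Equiv.Perm.mul_apply]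
  exact cayleyWalk_apply u _

theorem smul_pathChain_inv (u : FreeGroup ι) : u • pathChain u⁻¹ = -pathChain u := by
  rw [eq_neg_iff_add_eq_zero, add_comm, ← pathChain_mul, mul_inv_cancel, pathChain_one]

noncomputable def schreierCocycle (w : FreeGroup ι) : FreeGroup ι ⧸ B → ι → ℚ :=
  schreierProj B (pathChain w)

noncomputable def transversalCocycle
    (x : {x : FreeGroup ι ⧸ B | x ≠ ((1 : FreeGroup ι) : FreeGroup ι ⧸ B)}) :
    FreeGroup ι ⧸ B → ι → ℚ :=
  schreierCocycle B (Quotient.out (x : FreeGroup ι ⧸ B))⁻¹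

variable {B}

theorem schreierCocycle_one : schreierCocycle B (1 : FreeGroup ι) = 0 := by
  rw [schreierCocycle, pathChain_one, map_zero]

theorem schreierCocycle_mul {u : FreeGroup ι} (hu : u ∈ B) (v : FreeGroup ι) :
    schreierCocycle B (u * v) = schreierCocycle B u + schreierCocycle B v := by
  rw [schreierCocycle, pathChain_mul, map_add, schreierProj_smul B hu]
  rfl

theorem schreierCocycle_inv {u : FreeGroup ι} (hu : u ∈ B) :
    schreierCocycle B u⁻¹ = -schreierCocycle B u := by
  rw [schreierCocycle, ← schreierProj_smul B hu, smul_pathChain_inv, map_neg]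
  rfl

open scoped Classical in
theorem pi_single_eq_schreierCocycle {p s : FreeGroup ι} {i : ι}
    (hw : p * FreeGroup.of i * s⁻¹ ∈ B) :
    Pi.single ((p⁻¹ : FreeGroup ι) : FreeGroup ι ⧸ B) (Pi.single i 1) =
      schreierCocycle B (p * FreeGroup.of i * s⁻¹) - schreierCocycle B p +
        schreierCocycle B s := by
  have hs : schreierProj B ((p * FreeGroup.of i) • pathChain s⁻¹) = -schreierCocycle B s := by
    rw [show p * FreeGroup.of i = p * FreeGroup.of i * s⁻¹ * s by group, mul_smul,
      schreierProj_smul B hw, smul_pathChain_inv, map_neg]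
    rfl
  simp only [schreierCocycle, pathChain_mul, pathChain_of, map_add, Finsupp.comapSMul_single,
    smul_eq_mul, mul_one, schreierProj_single, hs]
  abel

open Submodule in
theorem finrank_span_schreierCocycle_le_rank [Group.FG B] :
    Module.finrank ℚ (span ℚ (schreierCocycle B '' B)) ≤ Group.rank B := by
  obtain ⟨T, hT, hTB⟩ := Group.rank_spec B
  set S := span ℚ (Set.range fun t : T => schreierCocycle B (t : B))
  have hmem (b : B) : schreierCocycle B b ∈ S := by
    have hb : b ∈ Subgroup.closure (T : Set B) := hTB ▸ Subgroup.mem_top b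
    induction hb using Subgroup.closure_induction with
    | mem t ht => exact subset_span ⟨⟨t, ht⟩, rfl⟩
    | one => simp [schreierCocycle_one]
    | mul x y _ _ hx hy =>
      rw [Subgroup.coe_mul, schreierCocycle_mul x.2]
      exact add_mem hx hy
    | inv x _ hx =>
      rw [Subgroup.coe_inv, schreierCocycle_inv x.2]
      exact neg_mem hx
  have : FiniteDimensional ℚ S := FiniteDimensional.span_of_finite ℚ (Set.finite_range _)
  calc Module.finrank ℚ (span ℚ (schreierCocycle B '' B))
      ≤ Module.finrank ℚ S := finrank_mono (span_le.mpr <| by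
        rintro _ ⟨u, hu, rfl⟩
        exact hmem ⟨u, hu⟩)
    _ ≤ Fintype.card T := finrank_range_le_card _
    _ = Group.rank B := by rw [Fintype.card_coe, hT]

open Submodule in
theorem span_schreierCocycle_sup_span_transversalCocycle [Finite ι] [Finite (FreeGroup ι ⧸ B)] :
    span ℚ (schreierCocycle B '' B) ⊔ span ℚ (Set.range (transversalCocycle B)) = ⊤ := by
  classical
  have : Fintype (FreeGroup ι ⧸ B) := Fintype.ofFinite _
  set V := span ℚ (schreierCocycle B '' B)
  set W := span ℚ (Set.range (transversalCocycle B))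
  have hV {u : FreeGroup ι} (hu : u ∈ B) : schreierCocycle B u ∈ V ⊔ W :=
    mem_sup_left (subset_span ⟨u, hu, rfl⟩)
  have hrep (x : FreeGroup ι ⧸ B) : schreierCocycle B (Quotient.out x)⁻¹ ∈ V ⊔ W := by
    by_cases hx : x = ((1 : FreeGroup ι) : FreeGroup ι ⧸ B)
    · subst hx
      have := QuotientGroup.out_eq' ((1 : FreeGroup ι) : FreeGroup ι ⧸ B)
      rw [QuotientGroup.eq, mul_one] at this
      exact hV this
    · exact mem_sup_right (subset_span ⟨⟨x, hx⟩, rfl⟩)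
  rw [eq_top_iff, ← (Pi.basis fun _ : FreeGroup ι ⧸ B => Pi.basisFun ℚ ι).span_eq, span_le]
  rintro _ ⟨⟨x, i⟩, rfl⟩
  set p := (Quotient.out x)⁻¹
  set y : FreeGroup ι ⧸ B := QuotientGroup.mk (p * FreeGroup.of i)⁻¹
  have hw : p * FreeGroup.of i * (Quotient.out y)⁻¹⁻¹ ∈ B := by
    simpa [mul_assoc] using B.inv_mem (QuotientGroup.eq.mp (QuotientGroup.out_eq' y))
  have hx : ((p⁻¹ : FreeGroup ι) : FreeGroup ι ⧸ B) = x := by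
    rw [inv_inv]
    exact QuotientGroup.out_eq' x
  rw [Pi.basis_apply, Pi.basisFun_apply, ← hx, pi_single_eq_schreierCocycle hw]
  exact add_mem (sub_mem (hV hw) (hrep x)) (hrep y)

end SchreierGraph

open Submodule in
theorem FreeGroup.index_mul_card_add_one_le_rank_add_index {ι : Type*} [Fintype ι]
    (B : Subgroup (FreeGroup ι)) [B.FiniteIndex] :
    B.index * Fintype.card ι + 1 ≤ Group.rank B + B.index := by
  classical
  have : Fintype (FreeGroup ι ⧸ B) := Fintype.ofFinite _
  have hdim : Module.finrank ℚ (FreeGroup ι ⧸ B → ι → ℚ) = B.index * Fintype.card ι := by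
    rw [Module.finrank_eq_card_basis (Pi.basis fun _ => Pi.basisFun ℚ ι), Fintype.card_sigma,
      Finset.sum_const, Finset.card_univ, smul_eq_mul, B.index_eq_card, Nat.card_eq_fintype_card]
  have hW : Module.finrank ℚ (span ℚ (Set.range (transversalCocycle B))) ≤ B.index - 1 := by
    refine (finrank_range_le_card _).trans_eq ?_
    rw [Set.card_ne_eq, B.index_eq_card, Nat.card_eq_fintype_card]
  have hsup := finrank_add_le_finrank_add_finrank (span ℚ (schreierCocycle B '' B))
    (span ℚ (Set.range (transversalCocycle B)))
  rw [span_schreierCocycle_sup_span_transversalCocycle, finrank_top, hdim] at hsup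
  have hV := finrank_span_schreierCocycle_le_rank (B := B)
  have hB := Subgroup.FiniteIndex.index_ne_zero (H := B)
  omega

theorem FreeGroup.rank_eq_card (ι : Type*) [Fintype ι] :
    Group.rank (FreeGroup ι) = Fintype.card ι := by
  classical
  refine le_antisymm ?_ ?_
  · calc Group.rank (FreeGroup ι) ≤ (Finset.univ.image FreeGroup.of).card := Group.rank_le (by
          rw [Finset.coe_image, Finset.coe_univ, Set.image_univ, FreeGroup.closure_range_of])
      _ ≤ Fintype.card ι := Finset.card_image_le
  · have := FreeGroup.index_mul_card_add_one_le_rank_add_index (⊤ : Subgroup (FreeGroup ι))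
    rw [Subgroup.index_top, Group.rank_congr Subgroup.topEquiv] at this
    omega

theorem Subgroup.index_le_index_map_fst_mul_card {G A : Type*} [Group G] [Group A] [Finite A]
    (H : Subgroup (G × A)) : H.index ≤ (H.map (MonoidHom.fst G A)).index * Nat.card A := by
  set L := (H.map (MonoidHom.fst G A)).prod (⊤ : Subgroup A)
  have hHL : H ≤ L := fun x hx => mem_prod.mpr ⟨mem_map_of_mem _ hx, trivial⟩
  have hrel : H.relIndex L ≤ Nat.card A := by
    refine Nat.card_le_card_of_surjective
      (fun a : A => ((⟨(1, a), mem_prod.mpr ⟨one_mem _, trivial⟩⟩ : L) : L ⧸ H.subgroupOf L)) ?_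
    rintro ⟨⟨g, a⟩, hL⟩
    obtain ⟨⟨g', a'⟩, hH, rfl⟩ := mem_map.mp (mem_prod.mp hL).1
    refine ⟨a * a'⁻¹, QuotientGroup.eq.mpr ?_⟩
    simpa [mem_subgroupOf] using hH
  rw [← relIndex_mul_index hHL, index_prod, index_top, mul_one, mul_comm]
  exact Nat.mul_le_mul_left _ hrel

theorem FreeGroup.card_sub_one_div_le_rank_sub_one_div {ι A : Type*} [Fintype ι] [Nonempty ι]
    [Group A] [Finite A] (H : Subgroup (FreeGroup ι × A)) [H.FiniteIndex] :
    ((Fintype.card ι : ℝ) - 1) / Nat.card A ≤ ((Group.rank H : ℝ) - 1) / H.index := by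
  set B := H.map (MonoidHom.fst (FreeGroup ι) A)
  have : B.FiniteIndex := ⟨fun h => Subgroup.FiniteIndex.index_ne_zero (H := H)
    (Nat.eq_zero_of_zero_dvd (h ▸ H.index_map_dvd Prod.fst_surjective))⟩
  have hB : (B.index * Fintype.card ι + 1 : ℝ) ≤ Group.rank B + B.index := by
    exact_mod_cast FreeGroup.index_mul_card_add_one_le_rank_add_index B
  have hrank : (Group.rank B : ℝ) ≤ Group.rank H := by
    exact_mod_cast Group.rank_le_of_surjective _ ((MonoidHom.fst _ _).subgroupMap_surjective H)
  have hI : (H.index : ℝ) ≤ B.index * Nat.card A := by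
    exact_mod_cast H.index_le_index_map_fst_mul_card
  have hk : (1 : ℝ) ≤ Fintype.card ι := by exact_mod_cast Fintype.card_pos
  have hA : (0 : ℝ) < Nat.card A := by exact_mod_cast Nat.card_pos
  have hH : (0 : ℝ) < H.index := by
    exact_mod_cast Nat.pos_of_ne_zero Subgroup.FiniteIndex.index_ne_zero
  rw [div_le_div_iff₀ hA hH]
  calc ((Fintype.card ι : ℝ) - 1) * H.index
      ≤ (Fintype.card ι - 1) * (B.index * Nat.card A) := by gcongr
    _ = (B.index * Fintype.card ι - B.index) * Nat.card A := by ring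
    _ ≤ (Group.rank H - 1) * Nat.card A := mul_le_mul_of_nonneg_right (by linarith) hA.le

theorem rankGradient_freeGroup_prod {ι A : Type*} [Fintype ι] [Nonempty ι] [Group A] [Finite A] :
    rankGradient (FreeGroup ι × A) = ((Fintype.card ι : ℝ) - 1) / Nat.card A := by
  set L := (MonoidHom.inl (FreeGroup ι) A).range
  have hL : L = (⊤ : Subgroup (FreeGroup ι)).prod ⊥ := by
    ext ⟨g, a⟩
    simp [L, Subgroup.mem_prod, eq_comm]
  have hLindex : L.index = Nat.card A := by
    rw [hL, Subgroup.index_prod, Subgroup.index_top, Subgroup.index_bot, one_mul]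
  have hLrank : Group.rank L = Fintype.card ι := by
    rw [← Group.rank_congr (MonoidHom.ofInjective (f := MonoidHom.inl (FreeGroup ι) A)
      fun _ _ h => congrArg Prod.fst h), FreeGroup.rank_eq_card]
  refine IsLeast.csInf_eq ⟨⟨L, hLindex ▸ Nat.card_pos.ne', ?_⟩, ?_⟩
  · rw [dGen_eq_rank, hLrank, hLindex]
  · rintro _ ⟨H, hH, rfl⟩
    have : H.FiniteIndex := ⟨hH⟩
    rw [dGen_eq_rank]
    exact FreeGroup.card_sub_one_div_le_rank_sub_one_div H

/-- every positive rational `q` is the rank gradient of a finitely presented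
group; in fact if `q = m/n` then `G = F_{m+1} × A` with `|A| = n` has `RG(G) = m/n`. -/
theorem rankGradient_rational (q : ℚ) (hq : 0 < q) :
    (∃ (G : Type) (inst : Group G),
        @IsFinitelyPresentedGroup G inst ∧ @rankGradient G inst = (q : ℝ)) ∧
    (∀ m n : ℕ, 0 < m → 0 < n → (q : ℝ) = (m : ℝ) / (n : ℝ) →
      ∀ (A : Type) [Group A], Nat.card A = n →
        rankGradient (FreeGroup (Fin (m + 1)) × A) = (m : ℝ) / (n : ℝ)) := by
  have key (m : ℕ) (A : Type) [Group A] [Finite A] :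
      rankGradient (FreeGroup (Fin (m + 1)) × A) = (m : ℝ) / Nat.card A := by
    rw [rankGradient_freeGroup_prod, Fintype.card_fin, Nat.cast_succ, add_sub_cancel_right]
  refine ⟨?_, fun m n _ hn _ A _ hA => ?_⟩
  · have : NeZero q.den := ⟨q.den_nz⟩
    have hnum : (q.num.toNat : ℝ) = q.num := by
      exact_mod_cast Int.toNat_of_nonneg (Rat.num_pos.mpr hq).le
    refine ⟨FreeGroup (Fin (q.num.toNat + 1)) × Multiplicative (ZMod q.den), inferInstance,
      .of_isFinitelyPresented, ?_⟩
    rw [key, Nat.card_congr Multiplicative.toAdd, Nat.card_zmod, hnum, Rat.cast_def]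
  · have : Finite A := Nat.finite_of_card_ne_zero (hA ▸ hn.ne')
    rw [key, hA]
end

section
/- Let G be a finitely generated group, p a prime, and let N be the intersection of all normal subgroups of G of index a power of p (the p-residual of G). Then RG_p(G) = RG_p(G/N). -/
open scoped commutatorElement

open Subgroup

section CommPow

variable {A B : Type*} [Group A] [Group B] (p : ℕ)

lemma commutator_le_pCommPow : commutator A ≤ pCommPow p A := by
  rw [commutator_eq_normalClosure]
  exact normalClosure_mono fun _ ⟨a, b, h⟩ ↦ Or.inl ⟨a, b, h.symm⟩

lemma pow_mem_pCommPow (a : A) : a ^ p ∈ pCommPow p A :=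
  subset_normalClosure (Or.inr ⟨a, rfl⟩)

lemma map_pCommPow_of_surjective {f : A →* B} (hf : Function.Surjective f) :
    (pCommPow p A).map f = pCommPow p B := by
  rw [pCommPow, map_normalClosure _ f hf, Set.image_union, pCommPow]
  congr 2
  · ext y
    constructor
    · rintro ⟨_, ⟨a, b, rfl⟩, rfl⟩
      exact ⟨f a, f b, map_commutatorElement f a b⟩
    · rintro ⟨a, b, rfl⟩
      obtain ⟨a, rfl⟩ := hf a
      obtain ⟨b, rfl⟩ := hf b
      exact ⟨⁅a, b⁆, ⟨a, b, rfl⟩, map_commutatorElement f a b⟩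
  · ext y
    constructor
    · rintro ⟨_, ⟨a, rfl⟩, rfl⟩
      exact ⟨f a, map_pow f a p⟩
    · rintro ⟨b, rfl⟩
      obtain ⟨a, rfl⟩ := hf b
      exact ⟨a ^ p, ⟨a, rfl⟩, map_pow f a p⟩

instance pCommPow_characteristic : (pCommPow p A).Characteristic :=
  characteristic_iff_map_eq.mpr fun φ ↦ map_pCommPow_of_surjective p φ.surjective

instance : IsMulCommutative (A ⧸ pCommPow p A) :=
  Normal.quotient_commutative_iff_commutator_le.mpr (commutator_le_pCommPow p)

lemma pow_eq_one_of_quotient_pCommPow (q : A ⧸ pCommPow p A) : q ^ p = 1 := by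
  induction q using QuotientGroup.induction_on with
  | H a => exact (QuotientGroup.eq_one_iff _).mpr (pow_mem_pCommPow p a)

open scoped IsMulCommutative in
lemma exists_index_pCommPow_eq_pow [Group.FG A] (hp : p.Prime) :
    ∃ m : ℕ, (pCommPow p A).index = p ^ m := by
  have : Fact p.Prime := ⟨hp⟩
  have : Finite (A ⧸ pCommPow p A) := CommGroup.finite_of_fg_isMulTorsion _ fun q ↦
    isOfFinOrder_iff_pow_eq_one.mpr ⟨p, hp.pos, pow_eq_one_of_quotient_pCommPow p q⟩
  exact IsPGroup.iff_card.mp fun q ↦ ⟨1, by rw [pow_one, pow_eq_one_of_quotient_pCommPow]⟩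

end CommPow

section Generators

variable {A B : Type*} [Group A] [Group B]

lemma closure_image_eq_top_of_mulEquiv (e : A ≃* B) {S : Set A} (hS : closure S = ⊤) :
    closure (e '' S) = ⊤ := by
  rw [← MonoidHom.coe_coe e, ← MonoidHom.map_closure, hS, map_top_of_surjective _ e.surjective]

lemma exists_finset_closure_eq_top_of_mulEquiv (e : A ≃* B) {S : Finset A}
    (hS : closure (S : Set A) = ⊤) :
    ∃ T : Finset B, T.card = S.card ∧ closure (T : Set B) = ⊤ :=
  ⟨S.map e.toEquiv.toEmbedding, S.card_map _, by
    simpa using closure_image_eq_top_of_mulEquiv e hS⟩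

lemma dGen_congr (e : A ≃* B) : dGen A = dGen B := by
  unfold dGen
  congr 1
  ext n
  constructor
  · rintro ⟨S, rfl, hS⟩
    exact exists_finset_closure_eq_top_of_mulEquiv e hS
  · rintro ⟨S, rfl, hS⟩
    exact exists_finset_closure_eq_top_of_mulEquiv e.symm hS

lemma dp_eq_of_surjective_of_ker_le (p : ℕ) {f : A →* B} (hf : Function.Surjective f)
    (hker : f.ker ≤ pCommPow p A) : dp p A = dp p B := by
  let g := (QuotientGroup.mk' (pCommPow p B)).comp f
  have hg : Function.Surjective g := (QuotientGroup.mk'_surjective _).comp hf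
  have hker_g : g.ker = pCommPow p A := by
    rw [← MonoidHom.comap_ker, QuotientGroup.ker_mk', ← map_pCommPow_of_surjective p hf,
      comap_map_eq_self hker]
  exact dGen_congr <|
    (QuotientGroup.quotientMulEquivOfEq hker_g.symm).trans
      (QuotientGroup.quotientKerEquivOfSurjective g hg)

end Generators

section Residual

variable {G : Type*} [Group G] (p : ℕ)

lemma pResidual_le {H : Subgroup G} (hN : H.Normal) (hk : ∃ k : ℕ, H.index = p ^ k) :
    pResidual p G ≤ H :=
  iInf₂_le H ⟨hN, hk⟩

lemma pResidual_le_map_pCommPow [Group.FG G] (hp : p.Prime) {H : Subgroup G} [H.Normal]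
    {k : ℕ} (hk : H.index = p ^ k) : pResidual p G ≤ (pCommPow p H).map H.subtype := by
  have : H.FiniteIndex := ⟨by rw [hk]; exact pow_ne_zero k hp.ne_zero⟩
  obtain ⟨m, hm⟩ := exists_index_pCommPow_eq_pow p (A := H) hp
  exact pResidual_le p inferInstance ⟨m + k, by rw [index_map_subtype, hm, hk, pow_add]⟩

lemma dp_map_mk'_pResidual [Group.FG G] (hp : p.Prime) {H : Subgroup G} (hN : H.Normal)
    {k : ℕ} (hk : H.index = p ^ k) :
    dp p (H.map (QuotientGroup.mk' (pResidual p G))) = dp p H := by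
  refine (dp_eq_of_surjective_of_ker_le p (MonoidHom.subgroupMap_surjective _ H) ?_).symm
  intro x hx
  have hx : (x : G) ∈ pResidual p G := by
    rw [← QuotientGroup.ker_mk' (pResidual p G)]
    exact congrArg Subtype.val hx
  obtain ⟨y, hy, hyx⟩ := pResidual_le_map_pCommPow p hp hk hx
  rwa [← Subtype.ext hyx]

end Residual

/-- a finitely generated group and its quotient by the `p`-residual
(its `p`-residualization) have the same `p`-gradient. -/
theorem pGradient_pResidualization (G : Type*) [Group G] [Group.FG G]
    (p : ℕ) (hp : p.Prime) :
    pGradient p G = pGradient p (G ⧸ pResidual p G) := by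
  set π := QuotientGroup.mk' (pResidual p G)
  have hπ : Function.Surjective π := QuotientGroup.mk'_surjective _
  have index_map {H : Subgroup G} (hN : H.Normal) (hk : ∃ k : ℕ, H.index = p ^ k) :
      (H.map π).index = H.index :=
    index_map_eq _ hπ (by rw [QuotientGroup.ker_mk']; exact pResidual_le p hN hk)
  unfold pGradient
  congr 1
  ext r
  constructor
  · rintro ⟨H, hN, ⟨k, hk⟩, rfl⟩
    refine ⟨H.map π, hN.map π hπ, ⟨k, (index_map hN ⟨k, hk⟩).trans hk⟩, ?_⟩
    rw [index_map hN ⟨k, hk⟩, dp_map_mk'_pResidual p hp hN hk]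
  · rintro ⟨H', hN', ⟨k, hk⟩, rfl⟩
    have hk' : (H'.comap π).index = p ^ k := by rw [index_comap_of_surjective _ hπ, hk]
    have hi := index_map (hN'.comap π) ⟨k, hk'⟩
    have hd := dp_map_mk'_pResidual p hp (hN'.comap π) hk'
    rw [map_comap_eq_self_of_surjective hπ] at hi hd
    exact ⟨H'.comap π, hN'.comap π, ⟨k, hk'⟩, by rw [hi, hd]⟩
end

section
/- Let G be a finitely generated group, p a prime, x a nontrivial element of G, and H a finite-index normal subgroup of G such that x^m ∈ H but no smaller positive power of x lies in H. Let π : G → G/⟨⟨x^m⟩⟩ be the quotient map by the normal closure of x^m in G. Then d_p(π(H)) ≥ d_p(H) - [G : H]/m; equivalently, with q(K) := d_p(K)/[G : K] (and noting [π(G) : π(H)] = [G : H]), one has q(π(H)) ≥ q(H) - 1/m. -/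
open scoped commutatorElement

/-!
Write `N = ⟪x^m⟫ ≤ H`, so that `π(H) = H/N`. Killing `k` elements of `H` together with their
`H`-conjugates lowers `d_p` by at most `k`, since the images of those elements in the abelian
quotient `H/[H,H]H^p`, added to lifts of generators of `π(H)/[π(H),π(H)]π(H)^p`, generate it.
As a normal subgroup of `H`, `N` is generated by the `G`-conjugates `g x^m g⁻¹`, and because `x`
commutes with `x^m` the conjugate only depends, up to `H`-conjugacy, on the coset of `g` modulo
`H⟨x⟩` (the preimage of `⟨xH⟩` in `G`). So `k = [G : H⟨x⟩] = [G : H]/m` elements suffice, `m`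
being the order of `x` modulo `H`.
-/

open Subgroup QuotientGroup

section dGen

variable {A B : Type*} [Group A] [Group B]

theorem dGen_le_card {S : Finset A} (h : closure (S : Set A) = ⊤) : dGen A ≤ S.card :=
  Nat.sInf_le ⟨S, rfl, h⟩

variable (A) in
theorem exists_finset_card_eq_dGen [Group.FG A] :
    ∃ S : Finset A, S.card = dGen A ∧ closure (S : Set A) = ⊤ :=
  Nat.sInf_mem (Group.fg_iff'.mp ‹_›)

theorem dGen_eq_zero_of_not_fg (h : ¬ Group.FG A) : dGen A = 0 :=
  Nat.sInf_eq_zero.mpr <| Or.inr <| Set.eq_empty_of_forall_notMem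
    fun _ ⟨S, _, hS⟩ => h (Group.fg_iff'.mpr ⟨_, S, rfl, hS⟩)

theorem dGen_le_dGen_add_card {φ : A →* B} (hφ : Function.Surjective φ) (S : Finset A)
    (hker : φ.ker ≤ closure (S : Set A)) : dGen A ≤ dGen B + S.card := by
  classical
  by_cases hA : Group.FG A
  swap
  · simp [dGen_eq_zero_of_not_fg hA]
  have : Group.FG B := Group.fg_of_surjective hφ
  obtain ⟨T, hT, hTgen⟩ := exists_finset_card_eq_dGen B
  set U := T.image (Function.surjInv hφ)
  have hU : (closure (U : Set A)).map φ = ⊤ := by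
    rw [MonoidHom.map_closure, Finset.coe_image, Set.image_image]
    simpa [Function.surjInv_eq hφ] using hTgen
  have htop : closure ((U ∪ S : Finset A) : Set A) = ⊤ := by
    rw [Finset.coe_union, Subgroup.closure_union, eq_top_iff, ← comap_top φ, ← hU, comap_map_eq]
    exact sup_le_sup_left hker _
  calc dGen A ≤ (U ∪ S).card := dGen_le_card htop
    _ ≤ U.card + S.card := Finset.card_union_le _ _
    _ ≤ dGen B + S.card := by rw [← hT]; gcongr; exact Finset.card_image_le

end dGen

section pCommPow

variable (p : ℕ) {A B : Type*} [Group A] [Group B]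

instance inst_s8 : IsMulCommutative (A ⧸ pCommPow p A) := by
  refine ⟨⟨fun u v => ?_⟩⟩
  induction u using QuotientGroup.induction_on with | H a => ?_
  induction v using QuotientGroup.induction_on with | H b => ?_
  rw [← mk_mul, ← mk_mul, QuotientGroup.eq]
  refine subset_normalClosure (Or.inl ⟨b⁻¹, a⁻¹, ?_⟩)
  group

theorem map_pCommPow {φ : A →* B} (hφ : Function.Surjective φ) :
    (pCommPow p A).map φ = pCommPow p B := by
  rw [pCommPow, pCommPow, map_normalClosure _ _ hφ, Set.image_union]
  congr 2
  · ext y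
    constructor
    · rintro ⟨_, ⟨a, b, rfl⟩, rfl⟩
      exact ⟨φ a, φ b, map_commutatorElement φ a b⟩
    · rintro ⟨a, b, rfl⟩
      obtain ⟨a, rfl⟩ := hφ a
      obtain ⟨b, rfl⟩ := hφ b
      exact ⟨⁅a, b⁆, ⟨a, b, rfl⟩, map_commutatorElement φ a b⟩
  · ext y
    constructor
    · rintro ⟨_, ⟨g, rfl⟩, rfl⟩
      exact ⟨φ g, map_pow φ g p⟩
    · rintro ⟨g, rfl⟩
      obtain ⟨g, rfl⟩ := hφ g
      exact ⟨g ^ p, ⟨g, rfl⟩, map_pow φ g p⟩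

theorem dp_le_dp_add_card {φ : A →* B} (hφ : Function.Surjective φ) (S : Finset A)
    (hker : φ.ker ≤ normalClosure (S : Set A)) : dp p A ≤ dp p B + S.card := by
  classical
  let θ := mk' (pCommPow p A)
  have hθ : Function.Surjective θ := mk'_surjective _
  let ψ := QuotientGroup.map (pCommPow p A) (pCommPow p B) φ
    (map_pCommPow p hφ ▸ le_comap_map φ _)
  have hψ : Function.Surjective ψ :=
    map_surjective_of_surjective _ _ _ ((mk'_surjective _).comp hφ) _
  have hkerψ : ψ.ker ≤ closure (θ '' S) := by
    rw [ker_map, ← map_pCommPow p hφ, comap_map_eq, Subgroup.map_sup,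
      (Subgroup.map_eq_bot_iff _).mpr (ker_mk' _).ge, bot_sup_eq]
    calc φ.ker.map θ ≤ (normalClosure (S : Set A)).map θ := map_mono hker
      _ = normalClosure (θ '' S) := map_normalClosure _ _ hθ
      _ ≤ closure (θ '' S) := normalClosure_le_normal subset_closure
  calc dp p A ≤ dp p B + (S.image θ).card :=
        dGen_le_dGen_add_card hψ _ (by rwa [Finset.coe_image])
    _ ≤ dp p B + S.card := by gcongr; exact Finset.card_image_le

end pCommPow

section conjugates

variable {G : Type*} [Group G] (H : Subgroup G) [H.Normal]

theorem orderOf_mul_index_comap_zpowers (x : G) :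
    orderOf (x : G ⧸ H) * ((zpowers (x : G ⧸ H)).comap (mk' H)).index = H.index := by
  rw [index_comap_of_surjective _ (mk'_surjective H), ← Nat.card_zpowers, card_mul_index,
    index_eq_card]

theorem exists_finset_normalClosure_subgroupOf_le {x y : G} (hy : y ∈ H) (hxy : Commute x y)
    [((zpowers (x : G ⧸ H)).comap (mk' H)).FiniteIndex] :
    ∃ S : Finset H, S.card ≤ ((zpowers (x : G ⧸ H)).comap (mk' H)).index ∧
      (normalClosure {y}).subgroupOf H ≤ normalClosure (S : Set H) := by
  classical
  set J := (zpowers (x : G ⧸ H)).comap (mk' H)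
  have := Fintype.ofFinite (G ⧸ J)
  let conj : G → H := fun g => ⟨g * y * g⁻¹, Normal.conj_mem ‹_› y hy g⟩
  set S := Finset.univ.image fun q : G ⧸ J => conj q.out
  refine ⟨S, ?_, ?_⟩
  · rw [index_eq_card, Nat.card_eq_fintype_card]
    exact Finset.card_image_le
  have hconj : ∀ g, conj g ∈ normalClosure (S : Set H) := by
    intro g
    obtain ⟨⟨j, hj⟩, hr⟩ := mk_out_eq_mul J g
    set r := (g : G ⧸ J).out
    obtain ⟨t, ht⟩ := mem_zpowers_iff.mp (mem_comap.mp hj)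
    have hh : (x ^ t)⁻¹ * j ∈ H := QuotientGroup.eq.mp ht
    set h := (x ^ t)⁻¹ * j
    have hg : g = r * h⁻¹ * (x ^ t)⁻¹ := by simp [h, hr]
    have hyt : (x ^ t)⁻¹ * y * x ^ t = y := by
      rw [mul_assoc, ← (hxy.zpow_left t).eq, inv_mul_cancel_left]
    let k : H := ⟨r * h⁻¹ * r⁻¹, Normal.conj_mem ‹_› _ (inv_mem hh) r⟩
    have hgr : conj g = k * conj r * k⁻¹ := Subtype.ext <|
      calc g * y * g⁻¹ = r * h⁻¹ * ((x ^ t)⁻¹ * y * x ^ t) * h * r⁻¹ := by rw [hg]; group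
        _ = (r * h⁻¹ * r⁻¹) * (r * y * r⁻¹) * (r * h⁻¹ * r⁻¹)⁻¹ := by rw [hyt]; group
    rw [hgr]
    exact normalClosure_normal.conj_mem _
      (subset_normalClosure (Finset.mem_image_of_mem _ (Finset.mem_univ _))) k
  rw [← comap_map_eq_self_of_injective H.subtype_injective (normalClosure (S : Set H))]
  refine comap_mono ((closure_le _).mpr fun z hz => ?_)
  obtain ⟨_, rfl, hyz⟩ := Group.mem_conjugatesOfSet_iff.mp hz
  obtain ⟨c, rfl⟩ := isConj_iff.mp hyz
  exact ⟨conj c, hconj c, rfl⟩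

end conjugates

theorem dp_quotient_lower_bound_general (p : ℕ) (G : Type*) [Group G] (x : G)
    (H : Subgroup G) [H.Normal] (hfin : H.index ≠ 0) (m : ℕ) (hm : 0 < m)
    (hxm : x ^ m ∈ H) (hmin : ∀ j : ℕ, 0 < j → j < m → x ^ j ∉ H) :
    ((dp p (H.map (QuotientGroup.mk' (Subgroup.normalClosure {x ^ m}))) : ℝ)
        ≥ (dp p H : ℝ) - (H.index : ℝ) / (m : ℝ)) ∧
    ((dp p (H.map (QuotientGroup.mk' (Subgroup.normalClosure {x ^ m}))) : ℝ) /
        ((H.map (QuotientGroup.mk' (Subgroup.normalClosure {x ^ m}))).index : ℝ)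
      ≥ (dp p H : ℝ) / (H.index : ℝ) - 1 / (m : ℝ)) := by
  set N := normalClosure {x ^ m}
  set J := (zpowers (x : G ⧸ H)).comap (mk' H)
  have hord : orderOf (x : G ⧸ H) = m := by
    refine (orderOf_eq_iff hm).mpr ⟨?_, fun j hjm hj => ?_⟩ <;>
      simp only [ne_eq, ← mk_pow, eq_one_iff]
    exacts [hxm, hmin j hj hjm]
  have hJ : m * J.index = H.index := hord ▸ orderOf_mul_index_comap_zpowers H x
  have : J.FiniteIndex := ⟨fun h => hfin (by rw [← hJ, h, mul_zero])⟩
  obtain ⟨S, hS, hNS⟩ := exists_finset_normalClosure_subgroupOf_le H hxm (Commute.self_pow x m)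
  have hdp : dp p H ≤ dp p (H.map (mk' N)) + S.card :=
    dp_le_dp_add_card p ((mk' N).subgroupMap_surjective H) S
      (by rwa [Subgroup.ker_subgroupMap, ker_mk'])
  have hindex : (H.map (mk' N)).index = H.index :=
    H.index_map_eq (mk'_surjective N) (by rw [ker_mk']; exact normalClosure_le_normal (by simpa))
  have hSm : (S.card : ℝ) ≤ H.index / m := by
    rw [le_div_iff₀ (by positivity), ← hJ]
    exact_mod_cast (mul_comm m _ ▸ Nat.mul_le_mul_left m hS : S.card * m ≤ m * J.index)
  have hdp' : (dp p H : ℝ) - H.index / m ≤ dp p (H.map (mk' N)) := by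
    have : (dp p H : ℝ) ≤ dp p (H.map (mk' N)) + S.card := by exact_mod_cast hdp
    linarith
  refine ⟨hdp', ?_⟩
  rw [hindex, ge_iff_le]
  calc (dp p H : ℝ) / H.index - 1 / m = ((dp p H : ℝ) - H.index / m) / H.index := by
        field_simp
    _ ≤ dp p (H.map (mk' N)) / H.index := by gcongr

/-- with `π : G → G/⟪x^m⟫` the quotient by the normal closure of `x^m`,
`d_p(π(H)) ≥ d_p(H) - [G : H]/m`; equivalently, with `q(K) = d_p(K)/[G : K]`,
`q(π(H)) ≥ q(H) - 1/m`. -/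
theorem dp_quotient_lower_bound (p : ℕ) (hp : p.Prime) (G : Type*) [Group G] [Group.FG G] (x : G) (hx : x ≠ 1)
    (H : Subgroup G) [H.Normal] (hfin : H.index ≠ 0) (m : ℕ) (hm : 0 < m)
    (hxm : x ^ m ∈ H) (hmin : ∀ j : ℕ, 0 < j → j < m → x ^ j ∉ H) :
    ((dp p (H.map (QuotientGroup.mk' (Subgroup.normalClosure {x ^ m}))) : ℝ)
        ≥ (dp p H : ℝ) - (H.index : ℝ) / (m : ℝ)) ∧
    ((dp p (H.map (QuotientGroup.mk' (Subgroup.normalClosure {x ^ m}))) : ℝ) /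
        ((H.map (QuotientGroup.mk' (Subgroup.normalClosure {x ^ m}))).index : ℝ)
      ≥ (dp p H : ℝ) / (H.index : ℝ) - 1 / (m : ℝ)) :=
  dp_quotient_lower_bound_general p G x H hfin m hm hxm hmin
end
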